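/- If G is a connected unicyclic graph on n vertices with α(G) + μ(G) = n − 1 (i.e., G is not a König–Egerváry graph), then no vertex of its unique cycle C belongs to N[core(G)]. -/

import Mathlib

/-- A set of vertices is independent if no two of its vertices are adjacent. -/
def SimpleGraph.IsIndepSet' {V : Type*} (G : SimpleGraph V) (s : Set V) : Prop :=
  s.Pairwise (fun a b => ¬ G.Adj a b)

/-- The independence number: the maximum cardinality of an independent set. -/
noncomputable def indepNum {V : Type*} (G : SimpleGraph V) : ℕ :=
  sSup {n | ∃ s : Set V, G.IsIndepSet' s ∧ s.ncard = n}

/-- The matching number: the maximum cardinality of a matching. -/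
noncomputable def matchNum {V : Type*} (G : SimpleGraph V) : ℕ :=
  sSup {n | ∃ M : SimpleGraph.Subgraph G, M.IsMatching ∧ M.edgeSet.ncard = n}

/-- A maximum independent set. -/
def IsMaxIndepSet {V : Type*} (G : SimpleGraph V) (s : Set V) : Prop :=
  G.IsIndepSet' s ∧ s.ncard = indepNum G

/-- The core: intersection of all maximum independent sets. -/
noncomputable def core {V : Type*} (G : SimpleGraph V) : Set V :=
  ⋂₀ {s | IsMaxIndepSet G s}

/-- Open neighborhood of a set. -/
def nbhdSet {V : Type*} (G : SimpleGraph V) (s : Set V) : Set V :=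
  {v | ∃ w ∈ s, G.Adj v w}

/-- Closed neighborhood of a set. -/
def closedNbhdSet {V : Type*} (G : SimpleGraph V) (s : Set V) : Set V :=
  s ∪ nbhdSet G s

/-- The tree component of `G - xy` containing `x`. -/
noncomputable def treeComp {V : Type*} (G : SimpleGraph V) (x y : V) :
    SimpleGraph ((G.deleteEdges {s(x,y)}).connectedComponentMk x).supp :=
  (G.deleteEdges {s(x,y)}).induce ((G.deleteEdges {s(x,y)}).connectedComponentMk x).supp

/-
Deleting an edge `wx` of the cycle leaves a spanning tree `T`. Forests satisfy `α + μ ≥ n` and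
`μ(T) ≤ μ(G)`, so `α(T) > α(G)`. A maximum independent set `S` of `T` is therefore not independent
in `G`: it contains both `w` and `x`, and `S \ {w}`, `S \ {x}` are maximum independent sets of `G`.
The first misses `w`, so `w ∉ core G`; the second contains `w`, so no vertex of the core is
adjacent to `w`.
-/

open SimpleGraph hiding indepNum
open Set

section

variable {V : Type*} {G H : SimpleGraph V}

lemma SimpleGraph.IsIndepSet'.of_deleteEdges {s : Set V} {w x : V}
    (hs : (G.deleteEdges {s(w, x)}).IsIndepSet' s) (hwx : ¬ (w ∈ s ∧ x ∈ s)) : G.IsIndepSet' s := by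
  intro a ha b hb hab hadj
  refine hs ha hb hab (deleteEdges_adj.2 ⟨hadj, fun h => hwx ?_⟩)
  rcases Sym2.eq_iff.1 h with ⟨rfl, rfl⟩ | ⟨rfl, rfl⟩
  exacts [⟨ha, hb⟩, ⟨hb, ha⟩]

lemma notMem_closedNbhdSet_core {A B : Set V} {w : V} (hA : IsMaxIndepSet G A) (hwA : w ∉ A)
    (hB : IsMaxIndepSet G B) (hwB : w ∈ B) : w ∉ closedNbhdSet G (core G) := by
  rintro (hw | ⟨u, hu, hwu⟩)
  · exact hwA (mem_sInter.1 hw A hA)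
  · exact hB.1 hwB (mem_sInter.1 hu B hB) hwu.ne hwu

section Finite

variable [Finite V]

lemma bddAbove_indepSet_ncard (G : SimpleGraph V) :
    BddAbove {n | ∃ s : Set V, G.IsIndepSet' s ∧ s.ncard = n} :=
  ⟨Nat.card V, by rintro _ ⟨s, -, rfl⟩; exact ncard_le_card s⟩

lemma ncard_le_indepNum {s : Set V} (hs : G.IsIndepSet' s) : s.ncard ≤ indepNum G :=
  le_csSup (bddAbove_indepSet_ncard G) ⟨s, hs, rfl⟩

lemma exists_isMaxIndepSet (G : SimpleGraph V) : ∃ s, IsMaxIndepSet G s :=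
  Nat.sSup_mem (s := {n | ∃ s : Set V, G.IsIndepSet' s ∧ s.ncard = n})
    ⟨0, ∅, pairwise_empty _, ncard_empty V⟩ (bddAbove_indepSet_ncard G)

lemma bddAbove_matching_ncard (G : SimpleGraph V) :
    BddAbove {n | ∃ M : G.Subgraph, M.IsMatching ∧ M.edgeSet.ncard = n} :=
  ⟨G.edgeSet.ncard, by rintro _ ⟨M, -, rfl⟩; exact ncard_le_ncard M.edgeSet_subset⟩

lemma ncard_edgeSet_le_matchNum {M : G.Subgraph} (hM : M.IsMatching) :
    M.edgeSet.ncard ≤ matchNum G :=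
  le_csSup (bddAbove_matching_ncard G) ⟨M, hM, rfl⟩

lemma exists_isMatching_ncard_edgeSet_eq_matchNum (G : SimpleGraph V) :
    ∃ M : G.Subgraph, M.IsMatching ∧ M.edgeSet.ncard = matchNum G :=
  Nat.sSup_mem (s := {n | ∃ M : G.Subgraph, M.IsMatching ∧ M.edgeSet.ncard = n})
    ⟨0, ⊥, fun _ hv => hv.elim, by simp⟩ (bddAbove_matching_ncard G)

lemma matchNum_mono (h : G ≤ H) : matchNum G ≤ matchNum H := by
  obtain ⟨M, hM, hcard⟩ := exists_isMatching_ncard_edgeSet_eq_matchNum G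
  calc matchNum G = (M.map (Hom.ofLE h)).edgeSet.ncard := by simp [← hcard]
    _ ≤ matchNum H := ncard_edgeSet_le_matchNum (hM.map_ofLE h)

lemma indepNum_deleteIncidenceSet_le (G : SimpleGraph V) (v : V) :
    indepNum (G.deleteIncidenceSet v) ≤ indepNum G + 1 := by
  obtain ⟨s, hs, hcard⟩ := exists_isMaxIndepSet (G.deleteIncidenceSet v)
  have hind : G.IsIndepSet' (s \ {v}) := fun a ha b hb hab hadj =>
    hs ha.1 hb.1 hab (deleteIncidenceSet_adj.2 ⟨hadj, ha.2, hb.2⟩)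
  have := ncard_le_ncard_sdiff_add_ncard s {v}
  rw [ncard_singleton] at this
  have := ncard_le_indepNum hind
  omega

lemma matchNum_add_one_le {u v : V} (hle : H ≤ G) (huv : G.Adj u v)
    (hu : ∀ w, ¬ H.Adj u w) (hv : ∀ w, ¬ H.Adj v w) : matchNum H + 1 ≤ matchNum G := by
  obtain ⟨M, hM, hcard⟩ := exists_isMatching_ncard_edgeSet_eq_matchNum H
  set M' := M.map (Hom.ofLE hle)
  have hdisj : Disjoint M'.support (G.subgraphOfAdj huv).support := by
    rw [disjoint_right]
    rintro x hx ⟨y, hxy⟩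
    simp only [M', Subgraph.map_adj, Hom.coe_ofLE, Relation.map_id_id] at hxy
    simp only [support_subgraphOfAdj, mem_insert_iff, mem_singleton_iff] at hx
    rcases hx with rfl | rfl
    exacts [hu y (M.adj_sub hxy), hv y (M.adj_sub hxy)]
  have huvM : s(u, v) ∉ M'.edgeSet := fun h => hu v (M.adj_sub (by simpa [M'] using h))
  have := ncard_edgeSet_le_matchNum ((hM.map_ofLE hle).sup (.subgraphOfAdj huv) hdisj)
  rw [Subgraph.edgeSet_sup, edgeSet_subgraphOfAdj,
    ncard_union_eq (disjoint_singleton_right.2 huvM), ncard_singleton] at this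
  simpa [M', hcard] using this

lemma SimpleGraph.IsAcyclic.exists_adj_forall_adj_eq (hG : G.IsAcyclic) (hE : G.edgeSet.Nonempty) :
    ∃ u v, G.Adj u v ∧ ∀ w, G.Adj u w → w = v := by
  obtain ⟨⟨a, b⟩, hab⟩ := hE
  have : Nonempty V := ⟨a⟩
  obtain ⟨u, v, p, hp, hmax⟩ := Walk.exists_isPath_forall_isPath_length_le_length G
  have hnil : ¬ p.Nil := by
    rw [← Walk.length_eq_zero_iff]
    have : 1 ≤ p.length := hmax a b _ (Path.singleton hab).2
    omega
  refine ⟨u, p.snd, p.adj_snd hnil, fun w hw => hG.eq_snd_of_adj_start hp hw ?_⟩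
  by_contra hwp
  have := hmax _ _ (.cons hw.symm p) (hp.cons hwp)
  simp at this

/- Induction on the number of edges: if `u` is a leaf with neighbour `v`, deleting the edges at `v`
raises `α` by at most one and lowers `μ` by at least one, since `uv` extends any matching of the
smaller graph. -/
theorem card_le_indepNum_add_matchNum_of_isAcyclic (hG : G.IsAcyclic) :
    Nat.card V ≤ indepNum G + matchNum G := by
  induction hn : G.edgeSet.ncard using Nat.strong_induction_on generalizing G with
  | _ n ih =>
  rcases eq_or_ne G ⊥ with rfl | hE
  · have := ncard_le_indepNum (G := (⊥ : SimpleGraph V)) (s := univ) fun _ _ _ _ _ h => h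
    rw [ncard_univ] at this
    omega
  obtain ⟨u, v, huv, hu⟩ := hG.exists_adj_forall_adj_eq (edgeSet_nonempty.2 hE)
  have hle := G.deleteIncidenceSet_le v
  have hlt : (G.deleteIncidenceSet v).edgeSet.ncard < n := by
    rw [← hn, edgeSet_deleteIncidenceSet]
    exact ncard_lt_ncard
      (sdiff_ssubset_left_iff.2 ⟨s(u, v), huv, G.mk'_mem_incidenceSet_right_iff.2 huv⟩)
  have := ih _ hlt (hG.anti hle) rfl
  have := indepNum_deleteIncidenceSet_le G v
  have := matchNum_add_one_le hle huv
    (fun w h => (deleteIncidenceSet_adj.1 h).2.2 (hu w (deleteIncidenceSet_adj.1 h).1))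
    (fun w h => (deleteIncidenceSet_adj.1 h).2.1 rfl)
  omega

lemma SimpleGraph.Walk.IsCycle.isTree_deleteEdges (hconn : G.Connected)
    (hcard : G.edgeSet.ncard = Nat.card V) {v : V} {c : G.Walk v v} (hc : c.IsCycle) {x y : V}
    (he : s(x, y) ∈ c.edges) : (G.deleteEdges {s(x, y)}).IsTree := by
  refine isTree_iff_connected_and_card.2
    ⟨hconn.connected_delete_edge_of_not_isBridge fun hb => hb.notMem_edges_of_isCycle hc he, ?_⟩
  rw [Nat.card_coe_set_eq, edgeSet_deleteEdges,
    ncard_sdiff_singleton_add_one (c.edges_subset_edgeSet he), hcard]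

lemma exists_isMaxIndepSet_sdiff_singleton (hsum : indepNum G + matchNum G < Nat.card V)
    {w x : V} (hT : (G.deleteEdges {s(w, x)}).IsAcyclic) :
    ∃ S : Set V, w ∈ S ∧ x ∈ S ∧ IsMaxIndepSet G (S \ {w}) ∧ IsMaxIndepSet G (S \ {x}) := by
  obtain ⟨S, hS, hScard⟩ := exists_isMaxIndepSet (G.deleteEdges {s(w, x)})
  have hlt : indepNum G < S.ncard := by
    have := card_le_indepNum_add_matchNum_of_isAcyclic hT
    have := matchNum_mono (G.deleteEdges_le {s(w, x)})
    omega
  have hwxS : w ∈ S ∧ x ∈ S := by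
    by_contra h
    exact (ncard_le_indepNum (hS.of_deleteEdges h)).not_gt hlt
  have hmax : ∀ z ∈ S, z = w ∨ z = x → IsMaxIndepSet G (S \ {z}) := by
    intro z hz hzwx
    have hind : G.IsIndepSet' (S \ {z}) :=
      SimpleGraph.IsIndepSet'.of_deleteEdges (Set.Pairwise.mono sdiff_subset hS)
        (by rcases hzwx with rfl | rfl <;> simp)
    refine ⟨hind, le_antisymm (ncard_le_indepNum hind) ?_⟩
    have := ncard_sdiff_singleton_add_one hz
    omega
  exact ⟨S, hwxS.1, hwxS.2, hmax w hwxS.1 (.inl rfl), hmax x hwxS.2 (.inr rfl)⟩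

end Finite

end

theorem stmt14 {V : Type*} [Fintype V] (G : SimpleGraph V)
    (hconn : G.Connected) (huni : G.edgeSet.ncard = Fintype.card V)
    {v : V} (c : G.Walk v v) (hc : c.IsCycle)
    (hsum : indepNum G + matchNum G = Fintype.card V - 1) :
    ∀ w ∈ c.support, w ∉ closedNbhdSet G (core G) := by
  intro w hw
  obtain ⟨e, he, hwe⟩ := (Walk.mem_support_iff_exists_mem_edges_of_not_nil hc.not_nil).1 hw
  obtain ⟨x, rfl⟩ := Sym2.mem_iff_exists.1 hwe
  have hT := (hc.isTree_deleteEdges hconn (by rwa [Nat.card_eq_fintype_card]) he).isAcyclic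
  have hlt : indepNum G + matchNum G < Nat.card V := by
    have := Fintype.card_pos_iff.2 hconn.nonempty
    rw [Nat.card_eq_fintype_card]
    omega
  obtain ⟨S, hwS, hxS, hmaxw, hmaxx⟩ := exists_isMaxIndepSet_sdiff_singleton hlt hT
  exact notMem_closedNbhdSet_core hmaxw (fun h => h.2 rfl) hmaxx
    ⟨hwS, (c.adj_of_mem_edges he).ne⟩
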